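/- For any r-partition (ν, τ) of words of length kn, LC_{kn}(ν,τ) := Σ_{i=1}^r LCS(X_{ν_i},...,X_{ν_{i+1}-1}; Y_{τ_i},...,Y_{τ_{i+1}-1}) ≤ LC_{kn}, and LC_{kn} = max over all (ν,τ) ∈ B_{k,n} of LC_{kn}(ν,τ). -/

import Mathlib

/-- Length of the longest common subsequence of two words. -/
def LCS {α : Type*} [DecidableEq α] (x y : List α) : ℕ :=
  ((x.sublists.filter (fun s => decide (s.Sublist y))).map List.length).foldr max 0

/-- The word `X_a, …, X_{a+len-1}` of the (1-indexed) sequence `X`. -/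
def word {α : Type*} (X : ℕ → α) (a len : ℕ) : List α :=
  (List.range len).map (fun i => X (a + i))

/-- `(ν, τ)` (encoded as functions `ℕ → ℕ`, with entries `ν 0, …, ν r` representing
`ν₁, …, ν_{r+1}` and pinned to `kn+1` from index `r` on) is an `r`-partition for
words of length `kn`. -/
def IsRPartition (n k r : ℕ) (ν τ : ℕ → ℕ) : Prop :=
  ν 0 = 1 ∧ τ 0 = 1 ∧ Monotone ν ∧ Monotone τ ∧
  (∀ i, r ≤ i → ν i = k * n + 1) ∧ (∀ i, r ≤ i → τ i = k * n + 1) ∧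
  (∀ j : ℕ, j + 1 < r →
    (ν (j + 1) - ν j) + (τ (j + 1) - τ j) = 2 * n - 1 ∨
    (ν (j + 1) - ν j) + (τ (j + 1) - τ j) = 2 * n) ∧
  (∀ j : ℕ, j + 1 = r → (ν (j + 1) - ν j) + (τ (j + 1) - τ j) < 2 * n)

/-- Membership of `(r, ν, τ)` in `B_{k,n}`. -/
def MemB (n k r : ℕ) (ν τ : ℕ → ℕ) : Prop :=
  k ≤ r ∧ r ≤ ⌈(2 * k * n : ℚ) / (2 * n - 1)⌉₊ ∧ IsRPartition n k r ν τ

/-! `LCS` is superadditive under concatenation, so `LC_{kn}(ν, τ) ≤ LC_{kn}` for every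
partition. Conversely, fix a longest common subsequence and walk along both words: skipping a
letter advances one word, a matched letter advances both, so the combined length `i + j` of the
consumed prefixes grows in steps of 1 or 2 and one can always cut off prefixes of combined length
`2n - 1` or `2n` without splitting a match. Cutting greedily in this way until fewer than `2n`
letters remain gives a partition in `B_{k,n}` whose blockwise `LCS` lengths add up to `LC_{kn}`. -/

section Words

variable {α : Type*}

theorem word_append (X : ℕ → α) (a l m : ℕ) :
    word X a l ++ word X (a + l) m = word X a (l + m) := by
  simp [word, List.range_add, add_assoc]

@[simp]
theorem length_word (X : ℕ → α) (a l : ℕ) : (word X a l).length = l := by simp [word]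

theorem take_word (X : ℕ → α) {a l i : ℕ} (h : i ≤ l) : (word X a l).take i = word X a i := by
  rw [← Nat.add_sub_cancel' h, ← word_append, List.take_left' (by simp)]

theorem drop_word (X : ℕ → α) (a l i : ℕ) : (word X a l).drop i = word X (a + i) (l - i) := by
  rcases le_total i l with h | h
  · rw [← Nat.add_sub_cancel' h, ← word_append, List.drop_left' (by simp)]
    simp
  · simp [word, h]

theorem word_append_sub (X : ℕ → α) {a b c : ℕ} (hab : a ≤ b) (hbc : b ≤ c) :
    word X a (b - a) ++ word X b (c - b) = word X a (c - a) := by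
  have h := word_append X a (b - a) (c - b)
  rwa [show a + (b - a) = b by omega, show b - a + (c - b) = c - a by omega] at h

theorem exists_split_of_sublist {s x y : List α} (hx : s.Sublist x) (hy : s.Sublist y) (t : ℕ)
    (ht : t ≤ x.length + y.length) :
    ∃ s₁ s₂ i j, s = s₁ ++ s₂ ∧ i ≤ x.length ∧ j ≤ y.length ∧ i + j ≤ t ∧ t ≤ i + j + 1 ∧
      s₁.Sublist (x.take i) ∧ s₁.Sublist (y.take j) ∧
      s₂.Sublist (x.drop i) ∧ s₂.Sublist (y.drop j) := by
  induction t using Nat.strong_induction_on generalizing s x y with | _ t ih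
  rcases t with _ | t
  · exact ⟨[], s, 0, 0, rfl, by simp, by simp, le_rfl, by simp, by simp, by simp, hx, hy⟩
  cases hx with
  | slnil =>
    exact ⟨[], [], 0, t + 1, rfl, le_rfl, by simpa using ht, by simp, by simp,
      by simp, by simp, by simp, by simp⟩
  | cons c hx =>
    obtain ⟨s₁, s₂, i, j, rfl, hi, hj, h₁, h₂, hx₁, hy₁, hx₂, hy₂⟩ :=
      ih t (by omega) hx hy (by simp at ht; omega)
    exact ⟨s₁, s₂, i + 1, j, rfl, by simpa using hi, hj, by omega, by omega,
      by simpa using hx₁.cons c, hy₁, by simpa using hx₂, hy₂⟩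
  | cons_cons c hx =>
    cases hy with
    | cons d hy =>
      obtain ⟨s₁, s₂, i, j, hs, hi, hj, h₁, h₂, hx₁, hy₁, hx₂, hy₂⟩ :=
        ih t (by omega) (hx.cons_cons c) hy (by simp at ht ⊢; omega)
      exact ⟨s₁, s₂, i, j + 1, hs, hi, by simpa using hj, by omega, by omega,
        hx₁, by simpa using hy₁.cons d, hx₂, by simpa using hy₂⟩
    | cons_cons _ hy =>
      rcases t with _ | t
      · exact ⟨[], _, 0, 0, rfl, by simp, by simp, by simp, by simp, by simp, by simp,
          hx.cons_cons c, hy.cons_cons c⟩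
      obtain ⟨s₁, s₂, i, j, rfl, hi, hj, h₁, h₂, hx₁, hy₁, hx₂, hy₂⟩ :=
        ih t (by omega) hx hy (by simp at ht; omega)
      exact ⟨c :: s₁, s₂, i + 1, j + 1, rfl, by simpa using hi, by simpa using hj, by omega,
        by omega, by simpa using hx₁.cons_cons c, by simpa using hy₁.cons_cons c,
        by simpa using hx₂, by simpa using hy₂⟩

end Words

-- `IsRPartition` with free end points, for the words `X_{ν 0} … X_{A-1}` and
-- `Y_{τ 0} … Y_{B-1}`.
structure IsBlockPartition (n r : ℕ) (ν τ : ℕ → ℕ) (A B : ℕ) : Prop where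
  monotone_left : Monotone ν
  monotone_right : Monotone τ
  left_eq : ∀ i, r ≤ i → ν i = A
  right_eq : ∀ i, r ≤ i → τ i = B
  size_inner : ∀ j, j + 1 < r →
    (ν (j + 1) - ν j) + (τ (j + 1) - τ j) = 2 * n - 1 ∨
    (ν (j + 1) - ν j) + (τ (j + 1) - τ j) = 2 * n
  size_last : ∀ j, j + 1 = r → (ν (j + 1) - ν j) + (τ (j + 1) - τ j) < 2 * n

theorem isRPartition_iff {n k r : ℕ} {ν τ : ℕ → ℕ} :
    IsRPartition n k r ν τ ↔
      ν 0 = 1 ∧ τ 0 = 1 ∧ IsBlockPartition n r ν τ (k * n + 1) (k * n + 1) :=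
  ⟨fun ⟨h₁, h₂, h₃, h₄, h₅, h₆, h₇, h₈⟩ => ⟨h₁, h₂, h₃, h₄, h₅, h₆, h₇, h₈⟩,
    fun ⟨h₁, h₂, h₃, h₄, h₅, h₆, h₇, h₈⟩ => ⟨h₁, h₂, h₃, h₄, h₅, h₆, h₇, h₈⟩⟩

theorem isBlockPartition_const (n A B : ℕ) :
    IsBlockPartition n 0 (fun _ => A) (fun _ => B) A B :=
  ⟨monotone_const, monotone_const, fun _ _ => rfl, fun _ _ => rfl,
    fun _ h => absurd h (by omega), fun _ h => absurd h (by omega)⟩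

def natCons (a : ℕ) (f : ℕ → ℕ) : ℕ → ℕ
  | 0 => a
  | m + 1 => f m

theorem IsBlockPartition.natCons {n r A B : ℕ} {ν τ : ℕ → ℕ}
    (h : IsBlockPartition n r ν τ A B) {a b : ℕ} (ha : a ≤ ν 0) (hb : b ≤ τ 0)
    (hinner : 0 < r → (ν 0 - a) + (τ 0 - b) = 2 * n - 1 ∨ (ν 0 - a) + (τ 0 - b) = 2 * n)
    (hlast : r = 0 → (ν 0 - a) + (τ 0 - b) < 2 * n) :
    IsBlockPartition n (r + 1) (natCons a ν) (natCons b τ) A B where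
  monotone_left := monotone_nat_of_le_succ fun
    | 0 => ha
    | m + 1 => h.monotone_left m.le_succ
  monotone_right := monotone_nat_of_le_succ fun
    | 0 => hb
    | m + 1 => h.monotone_right m.le_succ
  left_eq
    | 0, hi => absurd hi (by omega)
    | i + 1, hi => h.left_eq i (by omega)
  right_eq
    | 0, hi => absurd hi (by omega)
    | i + 1, hi => h.right_eq i (by omega)
  size_inner
    | 0, hj => hinner (by omega)
    | j + 1, hj => h.size_inner j (by omega)
  size_last
    | 0, hj => hlast (by omega)
    | j + 1, hj => h.size_last j (by omega)

section LCS

variable {α : Type*} [DecidableEq α]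

theorem length_le_LCS {s x y : List α} (hx : s.Sublist x) (hy : s.Sublist y) :
    s.length ≤ LCS x y :=
  List.le_max_of_le (by simpa using ⟨s, ⟨hx, hy⟩, rfl⟩) le_rfl

theorem exists_sublist_length_eq_LCS (x y : List α) :
    ∃ s : List α, s.Sublist x ∧ s.Sublist y ∧ s.length = LCS x y := by
  have hne : (x.sublists.filter (fun s => decide (s.Sublist y))).map List.length ≠ [] := by
    simpa using ⟨[], List.nil_sublist x, List.nil_sublist y⟩
  simpa [LCS, and_assoc] using List.maximum_mem (List.foldr_max_of_ne_nil hne).symm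

theorem LCS_add_LCS_le_LCS_append (x₁ x₂ y₁ y₂ : List α) :
    LCS x₁ y₁ + LCS x₂ y₂ ≤ LCS (x₁ ++ x₂) (y₁ ++ y₂) := by
  obtain ⟨s₁, hx₁, hy₁, h₁⟩ := exists_sublist_length_eq_LCS x₁ y₁
  obtain ⟨s₂, hx₂, hy₂, h₂⟩ := exists_sublist_length_eq_LCS x₂ y₂
  simpa [h₁, h₂] using length_le_LCS (hx₁.append hx₂) (hy₁.append hy₂)

theorem exists_LCS_le_LCS_take_add_LCS_drop (x y : List α) (t : ℕ)
    (ht : t ≤ x.length + y.length) :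
    ∃ i j, i ≤ x.length ∧ j ≤ y.length ∧ i + j ≤ t ∧ t ≤ i + j + 1 ∧
      LCS x y ≤ LCS (x.take i) (y.take j) + LCS (x.drop i) (y.drop j) := by
  obtain ⟨s, hx, hy, hs⟩ := exists_sublist_length_eq_LCS x y
  obtain ⟨s₁, s₂, i, j, rfl, hi, hj, h₁, h₂, hx₁, hy₁, hx₂, hy₂⟩ :=
    exists_split_of_sublist hx hy t ht
  refine ⟨i, j, hi, hj, h₁, h₂, ?_⟩
  rw [← hs, List.length_append]
  exact add_le_add (length_le_LCS hx₁ hy₁) (length_le_LCS hx₂ hy₂)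

def partitionLCS (X Y : ℕ → α) (r : ℕ) (ν τ : ℕ → ℕ) : ℕ :=
  ∑ i ∈ Finset.range r, LCS (word X (ν i) (ν (i + 1) - ν i)) (word Y (τ i) (τ (i + 1) - τ i))

theorem partitionLCS_le_LCS (X Y : ℕ → α) {ν τ : ℕ → ℕ} (hν : Monotone ν) (hτ : Monotone τ)
    (r : ℕ) :
    partitionLCS X Y r ν τ ≤ LCS (word X (ν 0) (ν r - ν 0)) (word Y (τ 0) (τ r - τ 0)) := by
  induction r with
  | zero => simp [partitionLCS]
  | succ r ih =>
    rw [partitionLCS, Finset.sum_range_succ, ← partitionLCS,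
      ← word_append_sub X (hν r.zero_le) (hν r.le_succ),
      ← word_append_sub Y (hτ r.zero_le) (hτ r.le_succ)]
    exact (Nat.add_le_add_right ih _).trans (LCS_add_LCS_le_LCS_append _ _ _ _)

theorem partitionLCS_natCons (X Y : ℕ → α) (r a b : ℕ) (ν τ : ℕ → ℕ) :
    partitionLCS X Y (r + 1) (natCons a ν) (natCons b τ) =
      LCS (word X a (ν 0 - a)) (word Y b (τ 0 - b)) + partitionLCS X Y r ν τ := by
  rw [partitionLCS, Finset.sum_range_succ', add_comm]
  rfl

-- The bound on `(r - 1) * (2n - 1)` is strict because a block is only cut off when at least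
-- `2n` letters remain.
theorem exists_isBlockPartition_LCS_le_partitionLCS {n : ℕ} (hn : 1 ≤ n) (X Y : ℕ → α)
    (a b lx ly : ℕ) :
    ∃ r ν τ, ν 0 = a ∧ τ 0 = b ∧ IsBlockPartition n r ν τ (a + lx) (b + ly) ∧
      lx + ly < r * (2 * n) ∧ (1 < r → (r - 1) * (2 * n - 1) < lx + ly) ∧
      LCS (word X a lx) (word Y b ly) ≤ partitionLCS X Y r ν τ := by
  induction h : lx + ly using Nat.strong_induction_on generalizing a b lx ly with | _ N ih
  subst h
  by_cases hsmall : lx + ly < 2 * n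
  · refine ⟨1, natCons a fun _ => a + lx, natCons b fun _ => b + ly, rfl, rfl,
      (isBlockPartition_const n _ _).natCons (by omega) (by omega) (by omega)
        (by simpa using hsmall), by simpa using hsmall, by omega, ?_⟩
    simp [partitionLCS, natCons]
  obtain ⟨i, j, hi, hj, h₁, h₂, hcut⟩ :=
    exists_LCS_le_LCS_take_add_LCS_drop (word X a lx) (word Y b ly) (2 * n) (by simp; omega)
  simp only [length_word] at hi hj
  rw [take_word X hi, take_word Y hj, drop_word, drop_word] at hcut
  obtain ⟨r, ν, τ, hν, hτ, hP, hlt, hgt, hle⟩ :=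
    ih _ (by omega) (a + i) (b + j) (lx - i) (ly - j) rfl
  rw [Nat.add_assoc, Nat.add_sub_cancel' hi, Nat.add_assoc, Nat.add_sub_cancel' hj] at hP
  obtain ⟨r, rfl⟩ : ∃ r', r = r' + 1 := Nat.exists_eq_add_one.2 (Nat.pos_of_ne_zero fun h0 => by simp [h0] at hlt)
  refine ⟨r + 2, natCons a ν, natCons b τ, rfl, rfl,
    hP.natCons (by omega) (by omega) (fun _ => by omega) (by simp), ?_, ?_, ?_⟩
  · have : (r + 2) * (2 * n) = (r + 1) * (2 * n) + 2 * n := by ring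
    omega
  · intro _
    rw [show r + 2 - 1 = r + 1 by omega, add_one_mul]
    rw [Nat.add_sub_cancel] at hgt
    rcases r with _ | r
    · omega
    · have := hgt (by omega)
      omega
  · rw [partitionLCS_natCons, hν, hτ, Nat.add_sub_cancel_left, Nat.add_sub_cancel_left]
    exact hcut.trans (Nat.add_le_add_left hle _)

end LCS

theorem le_ceil_div_of_sub_one_mul_lt {r m d : ℕ} (hd : 0 < d) (h : (r - 1) * d < m) :
    r ≤ ⌈(m / d : ℚ)⌉₊ := by
  have : r - 1 < ⌈(m / d : ℚ)⌉₊ :=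
    Nat.lt_ceil.2 (by rw [lt_div_iff₀ (by positivity)]; exact_mod_cast h)
  omega

/-- For every `r`-partition `(ν, τ) ∈ B_{k,n}`, the sum of the blockwise LCS
lengths `LC_{kn}(ν, τ)` is at most `LC_{kn}`, and `LC_{kn}` is the maximum of
`LC_{kn}(ν, τ)` over `B_{k,n}`. -/
theorem lcs_partition_decomposition {α : Type*} [DecidableEq α]
    (X Y : ℕ → α) (n k : ℕ) (hn : 1 ≤ n) (hk : 1 ≤ k) :
    (∀ (r : ℕ) (ν τ : ℕ → ℕ), MemB n k r ν τ →
      ∑ i ∈ Finset.range r,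
          LCS (word X (ν i) (ν (i + 1) - ν i)) (word Y (τ i) (τ (i + 1) - τ i))
        ≤ LCS (word X 1 (k * n)) (word Y 1 (k * n))) ∧
    (∃ (r : ℕ) (ν τ : ℕ → ℕ), MemB n k r ν τ ∧
      ∑ i ∈ Finset.range r,
          LCS (word X (ν i) (ν (i + 1) - ν i)) (word Y (τ i) (τ (i + 1) - τ i))
        = LCS (word X 1 (k * n)) (word Y 1 (k * n))) := by
  have upper (r : ℕ) (ν τ : ℕ → ℕ) (hB : MemB n k r ν τ) :
      partitionLCS X Y r ν τ ≤ LCS (word X 1 (k * n)) (word Y 1 (k * n)) := by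
    obtain ⟨hν, hτ, hP⟩ := isRPartition_iff.1 hB.2.2
    simpa [hν, hτ, hP.left_eq r le_rfl, hP.right_eq r le_rfl] using
      partitionLCS_le_LCS X Y hP.monotone_left hP.monotone_right r
  refine ⟨upper, ?_⟩
  obtain ⟨r, ν, τ, hν, hτ, hP, hlt, hgt, hle⟩ :=
    exists_isBlockPartition_LCS_le_partitionLCS hn X Y 1 1 (k * n) (k * n)
  have hkr : k < r := Nat.lt_of_mul_lt_mul_right (a := 2 * n) (by linarith)
  have hr : r ≤ ⌈(2 * k * n : ℚ) / (2 * n - 1)⌉₊ := by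
    have := le_ceil_div_of_sub_one_mul_lt (r := r) (m := 2 * k * n) (d := 2 * n - 1) (by omega)
      (by rw [mul_assoc]; have := hgt (by omega); omega)
    push_cast [Nat.cast_sub (show 1 ≤ 2 * n by omega)] at this
    exact this
  have hB : MemB n k r ν τ :=
    ⟨hkr.le, hr, isRPartition_iff.2 ⟨hν, hτ, by rwa [add_comm 1] at hP⟩⟩
  exact ⟨r, ν, τ, hB, (upper r ν τ hB).antisymm hle⟩
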